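/- Let g be a complex semisimple Lie algebra with compact real form u and conjugation τ, and Ω_τ as above. The moment map for the adjoint action of the compact group U on (g, Ω_τ), identified with a map μ: g → u via the Killing form of u, is given by μ(x) = [τ(ix), x] = −i[τx, x]; in particular [τx, x] ∈ i·u and −i[τx, x] ∈ u for every x ∈ g. -/

import Mathlib

/-!
The first three identities only use that `τ` is a conjugate-linear involutive automorphism of the
Lie bracket. For the last one, invariance of the Killing form `B` gives
`B(⁅τx, x⁆, A) = -B(⁅A, x⁆, τx)`. Since `B(X, τX)` is real, `(X, Y) ↦ B(X, τY)` is Hermitian,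
and `ad A` is skew for it when `τ A = A`; hence `B(⁅A, x⁆, τx)` is purely imaginary, and
multiplying by `-i` gives the real number `-Im B(⁅A, x⁆, τx) = ½ Ω_τ(⁅A, x⁆, x)`.
-/

/-- `Ω_τ(X,Y) = B_τ(iX, Y) = 2·Im(−⟨X, τY⟩)`: the symplectic form obtained from the real
inner product `B_τ(X,Y) = −⟨X,τY⟩_ℝ` (the real Killing form version, `= 2 Re H_τ`),
where `⟨·,·⟩` is the complex Killing form and `τ` the conjugation of the compact real
form. -/
noncomputable def OmegaTau2 {L : Type*} [LieRing L] [LieAlgebra ℂ L] [Module.Finite ℂ L]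
    (τ : L →ₗ[ℝ] L) (X Y : L) : ℝ :=
  2 * (-(killingForm ℂ L X (τ Y))).im

section Conjugation

variable {L : Type*} [AddCommGroup L] [Module ℂ L] {τ : L →ₗ[ℝ] L}

/-- Polarization of `X ↦ B(X, τX)` at `X + iY`. -/
lemma LinearMap.BilinForm.re_apply_conj_comm (B : LinearMap.BilinForm ℂ L)
    (hconj : ∀ (c : ℂ) (X : L), τ (c • X) = starRingEnd ℂ c • τ X)
    (him : ∀ X : L, (B X (τ X)).im = 0) (X Y : L) :
    (B X (τ Y)).re = (B Y (τ X)).re := by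
  have expand : B (X + Complex.I • Y) (τ (X + Complex.I • Y))
      = B X (τ X) + B Y (τ Y) - Complex.I * B X (τ Y) + Complex.I * B Y (τ X) := by
    simp only [map_add, hconj, Complex.conj_I, LinearMap.add_apply, map_smul,
      LinearMap.smul_apply, neg_smul, map_neg, smul_eq_mul]
    linear_combination (-B Y (τ Y)) * Complex.I_sq
  have h := him (X + Complex.I • Y)
  simp only [expand, Complex.sub_im, Complex.add_im, him X, him Y, Complex.mul_im,
    Complex.I_re, Complex.I_im] at h
  linarith

end Conjugation

section LieConjugation

variable {L : Type*} [LieRing L] [LieAlgebra ℂ L] {τ : L →ₗ[ℝ] L}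

lemma lie_conj_I_smul_left (hconj : ∀ (c : ℂ) (X : L), τ (c • X) = starRingEnd ℂ c • τ X)
    (x : L) : ⁅τ (Complex.I • x), x⁆ = (-Complex.I) • ⁅τ x, x⁆ := by
  rw [hconj, Complex.conj_I, smul_lie]

lemma conj_lie_conj_self (hbr : ∀ X Y : L, τ ⁅X, Y⁆ = ⁅τ X, τ Y⁆)
    (hinv : ∀ X : L, τ (τ X) = X) (x : L) : τ ⁅τ x, x⁆ = -⁅τ x, x⁆ := by
  rw [hbr, hinv, ← lie_skew]

lemma conj_neg_I_smul_of_conj_eq_neg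
    (hconj : ∀ (c : ℂ) (X : L), τ (c • X) = starRingEnd ℂ c • τ X)
    {y : L} (hy : τ y = -y) : τ ((-Complex.I) • y) = (-Complex.I) • y := by
  rw [hconj, hy, map_neg, Complex.conj_I, neg_neg, smul_neg, neg_smul]

lemma killingForm_lie_conj_self_apply (x A : L) :
    killingForm ℂ L ⁅τ x, x⁆ A = -killingForm ℂ L ⁅A, x⁆ (τ x) := by
  rw [LieModule.traceForm_apply_lie_apply, ← lie_skew x A, map_neg,
    LieModule.traceForm_comm]

/-- `ad A` is skew for the Hermitian form `B(X, τY)` when `τ A = A`. -/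
lemma re_killingForm_lie_conj_eq_zero (hbr : ∀ X Y : L, τ ⁅X, Y⁆ = ⁅τ X, τ Y⁆)
    (hconj : ∀ (c : ℂ) (X : L), τ (c • X) = starRingEnd ℂ c • τ X)
    (him : ∀ X : L, (killingForm ℂ L X (τ X)).im = 0) {A : L} (hA : τ A = A) (x : L) :
    (killingForm ℂ L ⁅A, x⁆ (τ x)).re = 0 := by
  have hskew : killingForm ℂ L x (τ ⁅A, x⁆) = -killingForm ℂ L ⁅A, x⁆ (τ x) := by
    rw [hbr, hA, ← LieModule.traceForm_apply_lie_apply, ← lie_skew x A, map_neg,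
      LinearMap.neg_apply]
  have hherm := (killingForm ℂ L).re_apply_conj_comm hconj him ⁅A, x⁆ x
  rw [hskew, Complex.neg_re] at hherm
  linarith

lemma killingForm_neg_I_smul_lie_conj_self (hbr : ∀ X Y : L, τ ⁅X, Y⁆ = ⁅τ X, τ Y⁆)
    (hconj : ∀ (c : ℂ) (X : L), τ (c • X) = starRingEnd ℂ c • τ X)
    (him : ∀ X : L, (killingForm ℂ L X (τ X)).im = 0) {A : L} (hA : τ A = A) (x : L) :
    killingForm ℂ L ((-Complex.I) • ⁅τ x, x⁆) A =
      ((-(killingForm ℂ L ⁅A, x⁆ (τ x)).im : ℝ) : ℂ) := by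
  have hre := re_killingForm_lie_conj_eq_zero hbr hconj him hA x
  rw [map_smul, LinearMap.smul_apply, killingForm_lie_conj_self_apply, smul_eq_mul]
  apply Complex.ext <;> simp [hre]

end LieConjugation

theorem stmt18_general {L : Type*} [LieRing L] [LieAlgebra ℂ L] [FiniteDimensional ℂ L]
    (τ : L →ₗ[ℝ] L)
    (hbr : ∀ X Y : L, τ ⁅X, Y⁆ = ⁅τ X, τ Y⁆)
    (hconj : ∀ (c : ℂ) (X : L), τ (c • X) = (starRingEnd ℂ) c • τ X)
    (hinv : ∀ X : L, τ (τ X) = X)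
    (hpos : ∀ X : L, X ≠ 0 →
      0 < (-(killingForm ℂ L X (τ X))).re ∧ (-(killingForm ℂ L X (τ X))).im = 0) :
    (∀ x : L, ⁅τ (Complex.I • x), x⁆ = (-Complex.I) • ⁅τ x, x⁆) ∧
    (∀ x : L, τ ⁅τ x, x⁆ = -⁅τ x, x⁆) ∧
    (∀ x : L, τ ((-Complex.I) • ⁅τ x, x⁆) = (-Complex.I) • ⁅τ x, x⁆) ∧
    (∀ (x A : L), τ A = A →
      killingForm ℂ L ((-Complex.I) • ⁅τ x, x⁆) A
        = (((1 / 2) * OmegaTau2 τ ⁅A, x⁆ x : ℝ) : ℂ)) := by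
  have him : ∀ X : L, (killingForm ℂ L X (τ X)).im = 0 := fun X ↦ by
    rcases eq_or_ne X 0 with rfl | hX
    · simp
    · simpa using (hpos X hX).2
  refine ⟨lie_conj_I_smul_left hconj, conj_lie_conj_self hbr hinv,
    fun x ↦ conj_neg_I_smul_of_conj_eq_neg hconj (conj_lie_conj_self hbr hinv x), ?_⟩
  intro x A hA
  rw [killingForm_neg_I_smul_lie_conj_self hbr hconj him hA, OmegaTau2, Complex.neg_im]
  push_cast
  ring

/-- Let `g` be a complex semisimple Lie algebra with compact real form `u` and
conjugation `τ`.  The moment map for the adjoint action of the compact group `U` on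
`(g, Ω_τ)`, identified with a map `μ : g → u` via the Killing form of `u` (which is the
restriction to `u` of the complex Killing form), is `μ(x) = [τ(ix), x] = −i[τx, x]`:
for every `x`, `[τx,x] ∈ i·u` and `−i[τx,x] ∈ u`, and
`⟨μ(x), A⟩_u = (1/2)·Ω_τ(ad(A)x, x)` for all `A ∈ u`. -/
theorem stmt18 {L : Type*} [LieRing L] [LieAlgebra ℂ L] [FiniteDimensional ℂ L]
    [LieAlgebra.IsSemisimple ℂ L]
    (τ : L →ₗ[ℝ] L)
    (hbr : ∀ X Y : L, τ ⁅X, Y⁆ = ⁅τ X, τ Y⁆)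
    (hconj : ∀ (c : ℂ) (X : L), τ (c • X) = (starRingEnd ℂ) c • τ X)
    (hinv : ∀ X : L, τ (τ X) = X)
    (hpos : ∀ X : L, X ≠ 0 →
      0 < (-(killingForm ℂ L X (τ X))).re ∧ (-(killingForm ℂ L X (τ X))).im = 0) :
    (∀ x : L, ⁅τ (Complex.I • x), x⁆ = (-Complex.I) • ⁅τ x, x⁆) ∧
    (∀ x : L, τ ⁅τ x, x⁆ = -⁅τ x, x⁆) ∧
    (∀ x : L, τ ((-Complex.I) • ⁅τ x, x⁆) = (-Complex.I) • ⁅τ x, x⁆) ∧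
    (∀ (x A : L), τ A = A →
      killingForm ℂ L ((-Complex.I) • ⁅τ x, x⁆) A
        = (((1 / 2) * OmegaTau2 τ ⁅A, x⁆ x : ℝ) : ℂ)) :=
  stmt18_general τ hbr hconj hinv hpos
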